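/- arXiv:2409.20170 — 6 statements merged into one kernel-verified Lean document; each statement's English description precedes it below -/
import Mathlib

section
/- Let A be an Archimedean linearly ordered subgroup of the reals (or any Archimedean linearly ordered Abelian group). If A contains a strictly decreasing sequence of positive elements, then A contains a non-trivial strongly decreasing sequence, i.e., a sequence (b_i) not identically 0 such that for each i there exists n_i ≥ 4 with n_i · b_{i+1} ≥ b_i ≥ 2 · b_{i+1}. -/
/-!
If `α` had a least positive element it would be order-isomorphic to `ℤ`, which has no strictly
decreasing sequence of positive elements; so `α` is densely ordered. Then every `b > 0` has some
`0 < c` with `2 • c ≤ b` (take `c = min y (b - y)` for any `0 < y < b`), and by the Archimedean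
property `b ≤ n • c` for some `n ≥ 4`. Iterating `b ↦ c` from `a 0` gives the sequence.
-/

section

variable {α : Type*} [AddCommGroup α] [LinearOrder α] [IsOrderedAddMonoid α]

theorem denselyOrdered_of_strictAnti_of_pos [Archimedean α] {a : ℕ → α} (hpos : ∀ i, 0 < a i)
    (hanti : StrictAnti a) : DenselyOrdered α := by
  refine (LinearOrderedAddCommGroup.discrete_or_denselyOrdered α).resolve_left ?_
  rintro ⟨e⟩
  refine not_strictAnti_of_wellFoundedLT (fun i ↦ (e (a i)).toNat) (strictAnti_nat_of_succ_lt ?_)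
  intro i
  have he_pos : 0 < e (a i) := by simpa using e.strictMono (hpos i)
  exact (Int.toNat_lt_toNat he_pos).2 (e.strictMono (hanti (Nat.lt_add_one i)))

theorem exists_pos_two_nsmul_le [DenselyOrdered α] {b : α} (hb : 0 < b) :
    ∃ c, 0 < c ∧ 2 • c ≤ b := by
  obtain ⟨y, hy, hyb⟩ := exists_between hb
  refine ⟨min y (b - y), lt_min hy (sub_pos.2 hyb), ?_⟩
  calc 2 • min y (b - y) = min y (b - y) + min y (b - y) := two_nsmul _
    _ ≤ y + (b - y) := add_le_add (min_le_left _ _) (min_le_right _ _)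
    _ = b := add_sub_cancel _ _

theorem exists_pos_le_nsmul_and_two_nsmul_le [DenselyOrdered α] [Archimedean α] {b : α}
    (hb : 0 < b) : ∃ c, 0 < c ∧ ∃ n : ℕ, 4 ≤ n ∧ b ≤ n • c ∧ 2 • c ≤ b := by
  obtain ⟨c, hc, h2c⟩ := exists_pos_two_nsmul_le hb
  obtain ⟨n, hn⟩ := Archimedean.arch b hc
  exact ⟨c, hc, max n 4, le_max_right _ _,
    hn.trans (nsmul_le_nsmul_left hc.le (le_max_left _ _)), h2c⟩

end

theorem exists_strongly_decreasing_of_strictly_decreasing {α : Type*}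
    [AddCommGroup α] [LinearOrder α] [IsOrderedAddMonoid α] [Archimedean α]
    (a : ℕ → α) (hpos : ∀ i, 0 < a i) (hdec : ∀ i, a (i + 1) < a i) :
    ∃ b : ℕ → α, (¬ ∀ i, b i = 0) ∧
      ∀ i, ∃ n : ℕ, 4 ≤ n ∧ b i ≤ n • b (i + 1) ∧ 2 • b (i + 1) ≤ b i := by
  have := denselyOrdered_of_strictAnti_of_pos hpos (strictAnti_nat_of_succ_lt hdec)
  choose! f hf using fun (b : α) (hb : 0 < b) ↦ exists_pos_le_nsmul_and_two_nsmul_le hb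
  have hiter_pos : ∀ i, 0 < f^[i] (a 0) := by
    intro i
    induction i with
    | zero => exact hpos 0
    | succ i ih => rw [Function.iterate_succ_apply']; exact (hf _ ih).1
  refine ⟨fun i ↦ f^[i] (a 0), fun h ↦ (hpos 0).ne' (h 0), fun i ↦ ?_⟩
  simpa only [Function.iterate_succ_apply'] using (hf _ (hiter_pos i)).2
end

section
/- In the lexicographic product ℤ ×_lex ℤ, every strongly decreasing sequence is trivial: if (x_i) satisfies that for each i there is n_i ≥ 4 with n_i · x_{i+1} ≥ x_i ≥ 2 · x_{i+1}, then x_i = (0,0) for all i. Moreover, ℤ ×_lex ℤ does contain a strictly decreasing sequence of positive elements, namely (1, -i) for i ∈ ℕ. -/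
/-!
A strongly decreasing sequence in a linearly ordered monoid is nonnegative, because
`2 • x (i + 1) ≤ n • x (i + 1)` with `n > 2`, and `x i = 0 ↔ x (i + 1) = 0`. So it is either
identically zero or positive with `x (i + 1) < 2 • x (i + 1) ≤ x i`, and in `ℤ` the latter is
ruled out by well-foundedness. In `ℤ ×ₗ ℤ` the first coordinates form a strongly decreasing
sequence in `ℤ`, hence vanish, and on `{0} × ℤ` the lexicographic order is that of `ℤ`.
-/

def StronglyDecreasing {α : Type*} [AddMonoid α] [LE α] (x : ℕ → α) : Prop :=
  ∀ i, ∃ n : ℕ, 4 ≤ n ∧ x i ≤ n • x (i + 1) ∧ 2 • x (i + 1) ≤ x i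

lemma nonneg_of_two_nsmul_le_nsmul {α : Type*} [AddCommMonoid α] [LinearOrder α]
    [IsOrderedCancelAddMonoid α] {n : ℕ} (hn : 2 < n) {a : α} (h : 2 • a ≤ n • a) : 0 ≤ a := by
  rw [← Nat.sub_add_cancel hn.le, add_nsmul, le_add_iff_nonneg_left] at h
  exact (nsmul_nonneg_iff (by omega)).1 h

namespace StronglyDecreasing

section Hom

variable {α β : Type*} [AddMonoid α] [AddMonoid β]

lemma map [Preorder α] [Preorder β] {x : ℕ → α} (hx : StronglyDecreasing x) (f : α →+o β) :
    StronglyDecreasing (f ∘ x) := by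
  intro i
  obtain ⟨n, hn, hle, hge⟩ := hx i
  refine ⟨n, hn, ?_, ?_⟩ <;>
    simpa only [Function.comp_apply, ← map_nsmul] using OrderHomClass.mono f ‹_›

lemma of_map [LE α] [LE β] {x : ℕ → α} (f : α →+ β) (hf : ∀ {a b}, f a ≤ f b ↔ a ≤ b)
    (hx : StronglyDecreasing (f ∘ x)) : StronglyDecreasing x := by
  intro i
  obtain ⟨n, hn, hle, hge⟩ := hx i
  simp only [Function.comp_apply, ← map_nsmul, hf] at hle hge
  exact ⟨n, hn, hle, hge⟩

theorem lex_eq_zero [PartialOrder α] [Preorder β]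
    (hα : ∀ y : ℕ → α, StronglyDecreasing y → y = 0)
    (hβ : ∀ y : ℕ → β, StronglyDecreasing y → y = 0) {x : ℕ → α ×ₗ β}
    (hx : StronglyDecreasing x) : x = 0 := by
  have hfst : OrderAddMonoidHom.fstₗ α β ∘ x = 0 := hα _ (hx.map _)
  have hx_inr : x = OrderAddMonoidHom.inrₗ α β ∘ fun i => (ofLex (x i)).2 :=
    funext fun i => Prod.ext (congrFun hfst i) rfl
  have hsnd := hβ _ <| of_map (OrderAddMonoidHom.inrₗ α β : β →+ α ×ₗ β)
    (by simp [Prod.Lex.toLex_le_toLex']) (hx_inr ▸ hx)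
  rw [hx_inr, hsnd]
  rfl

end Hom

section LinearOrder

variable {α : Type*} [AddCommMonoid α] [LinearOrder α] [IsOrderedCancelAddMonoid α]
  {x : ℕ → α}

lemma nonneg (hx : StronglyDecreasing x) (i : ℕ) : 0 ≤ x i := by
  have succ_nonneg (j : ℕ) : 0 ≤ x (j + 1) := by
    obtain ⟨n, hn, hle, hge⟩ := hx j
    exact nonneg_of_two_nsmul_le_nsmul (by omega) (hge.trans hle)
  obtain ⟨n, -, -, hge⟩ := hx i
  exact (nsmul_nonneg (succ_nonneg i) 2).trans hge

lemma succ_eq_zero_iff (hx : StronglyDecreasing x) (i : ℕ) : x (i + 1) = 0 ↔ x i = 0 := by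
  obtain ⟨n, -, hle, hge⟩ := hx i
  constructor
  · intro h
    rw [h, nsmul_zero] at hle
    exact hle.antisymm (hx.nonneg i)
  · intro h
    rw [h] at hge
    exact ((nsmul_nonpos_iff two_ne_zero).1 hge).antisymm (hx.nonneg _)

lemma eq_zero_iff_apply_zero (hx : StronglyDecreasing x) : x = 0 ↔ x 0 = 0 := by
  refine ⟨fun h => by simp [h], fun h => funext fun i => ?_⟩
  induction i with
  | zero => exact h
  | succ i ih => exact (hx.succ_eq_zero_iff i).2 ih

lemma strictAnti_of_apply_zero_ne_zero (hx : StronglyDecreasing x) (h : x 0 ≠ 0) :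
    StrictAnti x := by
  have hpos (i : ℕ) : 0 < x i := by
    refine (hx.nonneg i).lt_of_ne' ?_
    induction i with
    | zero => exact h
    | succ i ih => exact mt (hx.succ_eq_zero_iff i).1 ih
  refine strictAnti_nat_of_succ_lt fun i => ?_
  obtain ⟨n, -, -, hge⟩ := hx i
  rw [two_nsmul] at hge
  exact (lt_add_of_pos_left _ (hpos (i + 1))).trans_le hge

end LinearOrder

theorem int_eq_zero {x : ℕ → ℤ} (hx : StronglyDecreasing x) : x = 0 := by
  refine hx.eq_zero_iff_apply_zero.2 (by_contra fun h => ?_)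
  have hanti := hx.strictAnti_of_apply_zero_ne_zero h
  refine not_strictAnti_of_wellFoundedLT (fun i => (x i).toNat) fun i j hij => ?_
  exact (Int.toNat_lt_toNat ((hx.nonneg j).trans_lt (hanti hij))).2 (hanti hij)

end StronglyDecreasing

theorem zlex_strongly_decreasing_trivial :
    (∀ x : ℕ → Lex (ℤ × ℤ),
      (∀ i, ∃ n : ℕ, 4 ≤ n ∧ x i ≤ n • x (i + 1) ∧ 2 • x (i + 1) ≤ x i) →
      ∀ i, x i = 0) ∧
    (∀ i : ℕ, 0 < toLex ((1 : ℤ), -(i : ℤ)) ∧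
      toLex ((1 : ℤ), -((i : ℤ) + 1)) < toLex ((1 : ℤ), -(i : ℤ))) := by
  refine ⟨fun x hx => congrFun (StronglyDecreasing.lex_eq_zero
    (fun _ => StronglyDecreasing.int_eq_zero) (fun _ => StronglyDecreasing.int_eq_zero) hx),
    fun i => ⟨?_, ?_⟩⟩
  · exact Prod.Lex.toLex_lt_toLex.2 (Or.inl zero_lt_one)
  · exact Prod.Lex.toLex_lt_toLex.2 (Or.inr ⟨rfl, by omega⟩)
end

section
/- A linearly ordered Abelian group A admits a non-trivial strongly decreasing sequence if and only if there exist elements a_0, a_1, a_2, ... in A with a_0 > 0 and 4 · a_{i+1} ≥ a_i ≥ 2 · a_{i+1} for all i. (Any strongly decreasing sequence can be refined so that all ratios n_i may be taken equal to 4, by interpolating elements 2·a_{i+1} when a_i > 4·a_{i+1}.) -/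
/-!
Every term of a strongly decreasing sequence is nonnegative: for `a (i + 1) < 0` and `n > 2`,
`a i ≤ n • a (i + 1) < 2 • a (i + 1) ≤ a i`. Hence from a non-zero term on, `a i ≤ n • a (i + 1)`
keeps the sequence positive. For consecutive positive terms `2 • y ≤ x ≤ n • y` there is a `k`
with `2 ^ (k + 1) • y ≤ x ≤ 2 ^ (k + 2) • y`, so `x, 2 ^ k • y, …, 2 • y, y` has all ratios
between 2 and 4; concatenating these finite chains gives the infinite one.
-/

open Relation

theorem Relation.exists_seq_of_forall_transGen {β : Type*} {r : β → β → Prop} {a : ℕ → β}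
    (h : ∀ i, TransGen r (a i) (a (i + 1))) :
    ∃ b : ℕ → β, b 0 = a 0 ∧ ∀ m, r (b m) (b (m + 1)) := by
  suffices ∀ x, Acc (flip r) x → ∀ i, ¬TransGen r x (a i) from
    not_acc_iff_exists_descending_chain.mp fun hacc => this _ hacc 1 (h 0)
  intro x hx
  induction hx with
  | intro x _ ih =>
    intro i hxi
    obtain ⟨y, hxy, hyi⟩ := TransGen.head'_iff.mp hxi
    rcases reflTransGen_iff_eq_or_transGen.mp hyi with rfl | hyi
    · exact ih _ hxy (i + 1) (h i)
    · exact ih y hxy i hyi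

section OrderedGroup

variable {α : Type*} [AddCommGroup α] [LinearOrder α] [IsOrderedAddMonoid α] {x y : α} {n : ℕ}

theorem nonneg_of_two_nsmul_le_of_le_nsmul (hn : 2 < n) (h2 : 2 • y ≤ x) (hx : x ≤ n • y) :
    0 ≤ y := by
  by_contra! hy
  have : n • y < 2 • y := by
    simpa only [smul_neg, neg_lt_neg_iff] using nsmul_lt_nsmul_left (neg_pos.mpr hy) hn
  exact (hx.trans_lt this).not_ge h2

theorem exists_two_pow_nsmul_le_and_le_two_pow_nsmul (hy : 0 < y) (h2 : 2 • y ≤ x)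
    (hx : x ≤ n • y) : ∃ k : ℕ, 2 ^ (k + 1) • y ≤ x ∧ x ≤ 2 ^ (k + 2) • y := by
  classical
  have hex : ∃ k : ℕ, x < 2 ^ (k + 2) • y :=
    ⟨n, hx.trans_lt (nsmul_lt_nsmul_left hy (Nat.lt_two_pow_self.trans (by gcongr <;> omega)))⟩
  refine ⟨Nat.find hex, ?_, (Nat.find_spec hex).le⟩
  rcases hk : Nat.find hex with _ | k
  · simpa using h2
  · exact not_lt.mp (Nat.find_min hex (m := k) (by omega))

theorem transGen_ratio_two_four (hy : 0 < y) (h2 : 2 • y ≤ x) (hx : x ≤ n • y) :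
    TransGen (fun u v : α => u ≤ 4 • v ∧ 2 • v ≤ u) x y := by
  have two_pow_chain : ∀ k : ℕ,
      ReflTransGen (fun u v : α => u ≤ 4 • v ∧ 2 • v ≤ u) (2 ^ k • y) y := by
    intro k
    induction k with
    | zero => simpa using ReflTransGen.refl
    | succ k ih =>
      refine ReflTransGen.head ⟨?_, ?_⟩ ih
      · rw [smul_smul]
        exact nsmul_le_nsmul_left hy.le (by rw [pow_succ]; omega)
      · rw [smul_smul, ← pow_succ']
  obtain ⟨k, hlow, hhigh⟩ := exists_two_pow_nsmul_le_and_le_two_pow_nsmul hy h2 hx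
  refine TransGen.head' ⟨?_, ?_⟩ (two_pow_chain k)
  · rw [smul_smul]
    convert hhigh using 2
    ring
  · rwa [smul_smul, ← pow_succ']

end OrderedGroup

theorem strongly_decreasing_iff_ratio_four {α : Type*} [AddCommGroup α] [LinearOrder α] [IsOrderedAddMonoid α] :
    (∃ a : ℕ → α, (¬ ∀ i, a i = 0) ∧
      ∀ i, ∃ n : ℕ, 4 ≤ n ∧ a i ≤ n • a (i + 1) ∧ 2 • a (i + 1) ≤ a i) ↔
    (∃ a : ℕ → α, 0 < a 0 ∧
      ∀ i, a i ≤ 4 • a (i + 1) ∧ 2 • a (i + 1) ≤ a i) := by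
  constructor
  · rintro ⟨a, hne, h⟩
    choose n hn hle hge using h
    obtain ⟨j, hj⟩ := not_forall.mp hne
    have hj_pos : 0 < a j := by
      have hy := nonneg_of_two_nsmul_le_of_le_nsmul ((by norm_num : 2 < 4).trans_le (hn j)) (hge j) (hle j)
      exact (nsmul_nonneg hy 2 |>.trans (hge j)).lt_of_ne' hj
    have hpos : ∀ i, 0 < a (j + i) := by
      intro i
      induction i with
      | zero => exact hj_pos
      | succ i ih =>
        exact (nsmul_pos_iff (by have := hn (j + i); omega)).mp (ih.trans_le (hle (j + i)))
    obtain ⟨b, hb0, hb⟩ := Relation.exists_seq_of_forall_transGen (a := fun i => a (j + i))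
      fun i => transGen_ratio_two_four (hpos (i + 1)) (hge (j + i)) (hle (j + i))
    exact ⟨b, hb0 ▸ hpos 0, hb⟩
  · rintro ⟨a, ha0, h⟩
    exact ⟨a, fun h0 => ha0.ne' (h0 0), fun i => ⟨4, le_rfl, h i⟩⟩
end

section
/- For integers a ≠ b with 0 < a < b, the pointed ordered group ℤ_a satisfies the inequality (a·x - f) ∨ (-x) ≥ 0 for all x (with f interpreted as a), while ℤ_b does not satisfy it (witness x = 1). Consequently ℤ_a and ℤ_b generate different varieties of pointed Abelian ℓ-groups, and more generally ℤ_a ≅ ℤ_b as pointed ordered groups iff a = b. -/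
theorem pointed_int_separating_equation (a b : ℤ) (ha : 0 < a) (hab : a < b) :
    (∀ x : ℤ, 0 ≤ (a * x - a) ⊔ (-x)) ∧
    ¬ (∀ x : ℤ, 0 ≤ (a * x - b) ⊔ (-x)) ∧
    ¬ ∃ f : ℤ ≃+o ℤ, f a = b := by
  refine ⟨fun x => ?_, fun h => ?_, fun ⟨f, hf⟩ => ?_⟩
  · rcases le_or_gt x 0 with hx | hx
    · exact le_sup_of_le_right (by linarith)
    · exact le_sup_of_le_left (by nlinarith)
  · have := h 1
    simp only [mul_one] at this
    rcases le_sup_iff.mp this with h1 | h1 <;> linarith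
  · -- f is an additive order isomorphism of ℤ, hence identity
    have h1 : f 1 = 1 := by
      have hpos : 0 < f 1 := by
        have h01 : f 0 ≤ f 1 ↔ (0:ℤ) ≤ 1 := f.map_le_map_iff'
        have h10 : f 1 ≤ f 0 ↔ (1:ℤ) ≤ 0 := f.map_le_map_iff'
        simp [map_zero] at h01 h10
        omega
      have hdvd : f 1 ∣ 1 := ⟨f.symm 1, by
        have := map_zsmul f.toAddEquiv (f.symm 1) (1:ℤ)
        simp only [smul_eq_mul, mul_one] at this
        rw [show f.toAddEquiv (f.symm 1) = 1 from f.toAddEquiv.apply_symm_apply 1] at this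
        rw [mul_comm] at this; exact this⟩
      have := Int.le_of_dvd one_pos hdvd
      omega
    have : f a = a := by
      have := map_zsmul f.toAddEquiv a (1:ℤ)
      simp only [smul_eq_mul, mul_one] at this
      calc f a = a * f 1 := this
        _ = a := by rw [h1, mul_one]
    omega
end

section
/- Define the truncation map on real-valued assignments: for e: Var → ℝ let ē(p) = min(1, max(0, e(p))). Define recursively the translation τ on formulas of Łukasiewicz logic (connectives →, ⊙, ∨, ∧, constants f, t) by τ(p) = (p ∨ f) ∧ t, τ(ψ → χ) = (τψ → τχ) ∧ t, τ(ψ ⊙ χ) = (τψ ⊙ τχ) ∨ f, τ(c) = c for constants, τ commutes with ∨ and ∧. Interpreting formulas in the unbound algebra LU on ℝ (x → y = 1 - x + y, x ⊙ y = x + y - 1, f = 0, t = 1, ∨ = max, ∧ = min) and in the standard MV-algebra Ł on [0,1] (x → y = min(1, 1 - x + y), x ⊙ y = max(0, x + y - 1)), one has for every formula χ and every assignment e into ℝ: the value of χ in Ł under ē equals the value of τ(χ) in LU under e. -/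
inductive Fml where
  | var : ℕ → Fml
  | fls : Fml
  | tru : Fml
  | imp : Fml → Fml → Fml
  | odot : Fml → Fml → Fml
  | or : Fml → Fml → Fml
  | and : Fml → Fml → Fml

/-- Evaluation in the unbound algebra LU on ℝ. -/
def evalLU (e : ℕ → ℝ) : Fml → ℝ
  | .var p => e p
  | .fls => 0
  | .tru => 1
  | .imp ψ χ => 1 - evalLU e ψ + evalLU e χ
  | .odot ψ χ => evalLU e ψ + evalLU e χ - 1
  | .or ψ χ => max (evalLU e ψ) (evalLU e χ)
  | .and ψ χ => min (evalLU e ψ) (evalLU e χ)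

/-- Evaluation in the standard MV-algebra Ł on [0,1] ⊆ ℝ. -/
def evalMV (e : ℕ → ℝ) : Fml → ℝ
  | .var p => e p
  | .fls => 0
  | .tru => 1
  | .imp ψ χ => min 1 (1 - evalMV e ψ + evalMV e χ)
  | .odot ψ χ => max 0 (evalMV e ψ + evalMV e χ - 1)
  | .or ψ χ => max (evalMV e ψ) (evalMV e χ)
  | .and ψ χ => min (evalMV e ψ) (evalMV e χ)

/-- The translation τ. -/
def tau : Fml → Fml
  | .var p => .and (.or (.var p) .fls) .tru
  | .fls => .fls
  | .tru => .tru
  | .imp ψ χ => .and (.imp (tau ψ) (tau χ)) .tru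
  | .odot ψ χ => .or (.odot (tau ψ) (tau χ)) .fls
  | .or ψ χ => .or (tau ψ) (tau χ)
  | .and ψ χ => .and (tau ψ) (tau χ)

/-- Truncation of an assignment to [0,1]. -/
def trunc (e : ℕ → ℝ) : ℕ → ℝ := fun p => min 1 (max 0 (e p))

theorem mv_value_eq_lu_value_of_translation (e : ℕ → ℝ) (χ : Fml) :
    evalMV (trunc e) χ = evalLU e (tau χ) := by
  induction χ with
  | var p => simp [evalMV, evalLU, tau, trunc]; rw [min_comm, max_comm]
  | fls => rfl
  | tru => rfl
  | imp ψ χ ihψ ihχ => simp [evalMV, evalLU, tau, ihψ, ihχ, min_comm]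
  | odot ψ χ ihψ ihχ => simp [evalMV, evalLU, tau, ihψ, ihχ, max_comm]
  | or ψ χ ihψ ihχ => simp [evalMV, evalLU, tau, ihψ, ihχ]
  | and ψ χ ihψ ihχ => simp [evalMV, evalLU, tau, ihψ, ihχ]
end

section
/- With the translation τ of the previous context, the semantic consequence relations correspond: for a finite set Γ of formulas and a formula φ, Γ entails φ over the standard MV-algebra Ł (i.e., every [0,1]-evaluation making all of Γ equal to 1 makes φ equal to 1) if and only if τ[Γ] entails τ(φ) over the unbound algebra LU (i.e., every ℝ-evaluation making all values of τ[Γ] ≥ 1 makes the value of τ(φ) ≥ 1). -/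
lemma evalMV_mem (e : ℕ → ℝ) (he : ∀ p, e p ∈ Set.Icc (0:ℝ) 1) (χ : Fml) :
    evalMV e χ ∈ Set.Icc (0:ℝ) 1 := by
  induction χ with
  | var p => exact he p
  | fls => simp [evalMV]
  | tru => simp [evalMV]
  | imp ψ χ ih1 ih2 =>
      obtain ⟨a,b⟩ := ih1; obtain ⟨c,d⟩ := ih2
      constructor
      · simp only [evalMV, le_min_iff]; constructor <;> linarith
      · simp only [evalMV]; exact min_le_left _ _
  | odot ψ χ ih1 ih2 =>
      obtain ⟨a,b⟩ := ih1; obtain ⟨c,d⟩ := ih2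
      constructor
      · simp only [evalMV]; exact le_max_left _ _
      · simp only [evalMV, max_le_iff]; constructor <;> linarith
  | or ψ χ ih1 ih2 =>
      obtain ⟨a,b⟩ := ih1; obtain ⟨c,d⟩ := ih2
      exact ⟨le_max_of_le_left a, max_le b d⟩
  | and ψ χ ih1 ih2 =>
      obtain ⟨a,b⟩ := ih1; obtain ⟨c,d⟩ := ih2
      exact ⟨le_min a c, min_le_of_left_le b⟩

lemma evalLU_tau (e : ℕ → ℝ) (χ : Fml) :
    evalLU e (tau χ) = evalMV (fun p => min 1 (max 0 (e p))) χ := by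
  induction χ with
  | var p => simp [tau, evalLU, evalMV, min_comm, max_comm]
  | fls => rfl
  | tru => rfl
  | imp ψ χ ih1 ih2 => simp [tau, evalLU, evalMV, ih1, ih2, min_comm]
  | odot ψ χ ih1 ih2 => simp [tau, evalLU, evalMV, ih1, ih2, max_comm]
  | or ψ χ ih1 ih2 => simp [tau, evalLU, evalMV, ih1, ih2]
  | and ψ χ ih1 ih2 => simp [tau, evalLU, evalMV, ih1, ih2]

theorem luk_entailment_iff_lu_entailment (Γ : Finset Fml) (φ : Fml) :
    (∀ e : ℕ → ℝ, (∀ p, e p ∈ Set.Icc (0 : ℝ) 1) →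
      (∀ γ ∈ Γ, evalMV e γ = 1) → evalMV e φ = 1) ↔
    (∀ e : ℕ → ℝ, (∀ γ ∈ Γ, 1 ≤ evalLU e (tau γ)) → 1 ≤ evalLU e (tau φ)) := by
  constructor
  · intro h e hΓ
    set f : ℕ → ℝ := fun p => min 1 (max 0 (e p)) with hf
    have hfI : ∀ p, f p ∈ Set.Icc (0:ℝ) 1 := by
      intro p
      constructor
      · exact le_min zero_le_one (le_max_left _ _)
      · exact min_le_left _ _
    have := h f hfI (fun γ hγ => by
      have h1 := hΓ γ hγ
      rw [evalLU_tau] at h1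
      have h2 := (evalMV_mem f hfI γ).2
      linarith)
    rw [evalLU_tau]
    exact this.ge
  · intro h e he hΓ
    have hfe : (fun p => min 1 (max 0 (e p))) = e := by
      funext p
      rw [max_eq_right (he p).1, min_eq_right (he p).2]
    have := h e (fun γ hγ => by rw [evalLU_tau, hfe, hΓ γ hγ])
    rw [evalLU_tau, hfe] at this
    exact le_antisymm (evalMV_mem e he φ).2 this
end
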